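/- Let (A,σ) be an F-algebra with involution and 𝒫 a positive cone on (A,σ). Suppose a hermitian form h over (A,σ) satisfies h ≅ ⟨a_1,…,a_r⟩_σ ⊥ ⟨b_1,…,b_s⟩_σ and h ≅ ⟨a'_1,…,a'_p⟩_σ ⊥ ⟨b'_1,…,b'_q⟩_σ, where all a_i, a'_i are invertible elements of 𝒫 and all b_j, b'_j are invertible elements of -𝒫. Then r = p and s = q. -/

import Mathlib

open Pointwise

/-- An ordering on a field `F`. -/
def IsOrdering {F : Type*} [Field F] (P : Set F) : Prop :=
  (∀ x ∈ P, ∀ y ∈ P, x + y ∈ P) ∧ (∀ x ∈ P, ∀ y ∈ P, x * y ∈ P) ∧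
  (∀ x : F, x ∈ P ∨ -x ∈ P) ∧ (∀ x ∈ P, -x ∈ P → x = 0)

/-- A prepositive cone on an `F`-algebra with involution `(A, star)`:
a subset of the symmetric elements which is nonempty, closed under addition,
closed under `p ↦ star x * p * x`, whose set of preserving scalars is an ordering
of `F`, and which is proper (`PC ∩ -PC = {0}`). -/
def IsPrepositiveCone (F : Type*) {A : Type*} [Field F] [Ring A] [Algebra F A] [StarRing A]
    (PC : Set A) : Prop :=
  (∀ a ∈ PC, star a = a) ∧ PC.Nonempty ∧ (∀ a ∈ PC, ∀ b ∈ PC, a + b ∈ PC) ∧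
  (∀ x : A, ∀ p ∈ PC, star x * p * x ∈ PC) ∧
  IsOrdering {u : F | ∀ p ∈ PC, u • p ∈ PC} ∧
  (∀ a ∈ PC, -a ∈ PC → a = 0)

/-- A prepositive cone over the ordering `P` of `F`. -/
def IsPrepositiveConeOver (F : Type*) {A : Type*} [Field F] [Ring A] [Algebra F A] [StarRing A]
    (P : Set F) (PC : Set A) : Prop :=
  IsPrepositiveCone F PC ∧ {u : F | ∀ p ∈ PC, u • p ∈ PC} = P

open Matrix

/-- A positive cone: a prepositive cone maximal with respect to inclusion. -/
def IsPositiveCone (F : Type*) {A : Type*} [Field F] [Ring A] [Algebra F A] [StarRing A]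
    (PC : Set A) : Prop :=
  IsPrepositiveCone F PC ∧
  ∀ QC : Set A, IsPrepositiveCone F QC → PC ⊆ QC → QC = PC

/-!
A unit `a ∈ PC` is anisotropic: if `x⋆ a x = 0` but `a x ≠ 0`, simplicity of `A` writes `1` as a
sum of terms `u (a x) v`, and the identity
`(u⋆ + x t)⋆ a (u⋆ + x t) = u a u⋆ + (u a x t) + (u a x t)⋆` then yields `W ∈ PC` with
`W + t + t⋆ ∈ PC` for every `t`, which forces `PC = {0}`.

Hence, if `U⋆ ⟨c⟩ U = ⟨d⟩`, a vector `w` vanishing where `d i ∈ PC` and with `U w` vanishing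
where `c i ∉ PC` satisfies `⟨d⟩(w) = ⟨c⟩(U w) ∈ PC ∩ -PC`, so `w = 0`. Counting `F`-dimensions
gives `#{c i ∈ PC} ≤ #{d i ∈ PC}`; the same inequality for `-c, -d` gives the reverse one.
-/

namespace IsPrepositiveCone

variable {F A : Type*} [Field F] [Ring A] [Algebra F A] [StarRing A] {PC : Set A}

theorem star_eq (hPC : IsPrepositiveCone F PC) {a : A} (ha : a ∈ PC) : star a = a :=
  hPC.1 a ha

theorem add_mem (hPC : IsPrepositiveCone F PC) {a b : A} (ha : a ∈ PC) (hb : b ∈ PC) :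
    a + b ∈ PC :=
  hPC.2.2.1 a ha b hb

theorem star_mul_mul_mem (hPC : IsPrepositiveCone F PC) (x : A) {a : A} (ha : a ∈ PC) :
    star x * a * x ∈ PC :=
  hPC.2.2.2.1 x a ha

theorem eq_zero_of_mem_of_neg_mem (hPC : IsPrepositiveCone F PC) {a : A} (ha : a ∈ PC)
    (ha' : -a ∈ PC) : a = 0 :=
  hPC.2.2.2.2.2 a ha ha'

theorem zero_mem (hPC : IsPrepositiveCone F PC) : (0 : A) ∈ PC := by
  obtain ⟨p, hp⟩ := hPC.2.1
  simpa using hPC.star_mul_mul_mem 0 hp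

theorem sum_mem (hPC : IsPrepositiveCone F PC) {ι : Type*} {s : Finset ι} {f : ι → A}
    (hf : ∀ i ∈ s, f i ∈ PC) : ∑ i ∈ s, f i ∈ PC :=
  Finset.sum_induction f (· ∈ PC) (fun _ _ ↦ hPC.add_mem) hPC.zero_mem hf

theorem eq_zero_of_sum_eq_zero (hPC : IsPrepositiveCone F PC) {ι : Type*} {s : Finset ι}
    {f : ι → A} (hf : ∀ i ∈ s, f i ∈ PC) (hsum : ∑ i ∈ s, f i = 0) {i : ι} (hi : i ∈ s) :
    f i = 0 := by
  classical
  refine hPC.eq_zero_of_mem_of_neg_mem (hf i hi) ?_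
  rw [← Finset.add_sum_erase s f hi, add_eq_zero_iff_neg_eq] at hsum
  rw [hsum]
  exact hPC.sum_mem fun j hj ↦ hf j (Finset.mem_of_mem_erase hj)

theorem eq_zero_of_forall_add_add_star_mem (hPC : IsPrepositiveCone F PC) {W : A}
    (hW : W ∈ PC) (h : ∀ t, W + (t + star t) ∈ PC) {a : A} (ha : a ∈ PC) : a = 0 := by
  have eq_neg : ∀ b ∈ PC, b = -W := by
    intro b hb
    have hWb : W + b ∈ PC := hPC.add_mem hW hb
    have hWb' : -(W + b) ∈ PC := by
      have := hPC.add_mem (h (-(W + b))) hb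
      rwa [star_neg, star_add, hPC.star_eq hW, hPC.star_eq hb,
        show W + (-(W + b) + -(W + b)) + b = -(W + b) by abel] at this
    exact eq_neg_of_add_eq_zero_right (hPC.eq_zero_of_mem_of_neg_mem hWb hWb')
  have h2a : a + a = a := by rw [eq_neg (a + a) (hPC.add_mem ha ha), eq_neg a ha]
  simpa using h2a

theorem exists_forall_add_add_star_mem_of_mem_span (hPC : IsPrepositiveCone F PC) {a x : A}
    (ha : a ∈ PC) (hx : star x * a * x = 0) {y : A} (hy : y ∈ TwoSidedIdeal.span {a * x})
    (u : A) : ∃ W ∈ PC, ∀ t, W + (u * y * t + star (u * y * t)) ∈ PC := by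
  -- quantifying over the left factor `u` is what makes the property absorb left multiplication
  induction hy using TwoSidedIdeal.span_induction generalizing u with
  | mem y hy =>
    rw [Set.mem_singleton_iff] at hy
    subst hy
    refine ⟨u * a * star u, by simpa using hPC.star_mul_mul_mem (star u) ha, fun t ↦ ?_⟩
    convert hPC.star_mul_mul_mem (star u + x * t) ha using 1
    rw [star_add, star_star, star_mul, star_mul, star_mul, star_mul, hPC.star_eq ha]
    calc u * a * star u + (u * (a * x) * t + star t * (star x * a * star u))
        = u * a * star u + (u * (a * x) * t + star t * (star x * a * star u))
          + star t * (star x * a * x) * t := by rw [hx]; simp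
      _ = (u + star t * star x) * a * (star u + x * t) := by noncomm_ring
  | zero => exact ⟨0, hPC.zero_mem, by simpa using hPC.zero_mem⟩
  | add y z _ _ ihy ihz =>
    obtain ⟨W₁, hW₁, h₁⟩ := ihy u
    obtain ⟨W₂, hW₂, h₂⟩ := ihz u
    refine ⟨W₁ + W₂, hPC.add_mem hW₁ hW₂, fun t ↦ ?_⟩
    convert hPC.add_mem (h₁ t) (h₂ t) using 1
    simp only [mul_add, add_mul, star_add]
    abel
  | neg y _ ih =>
    obtain ⟨W, hW, h⟩ := ih u
    exact ⟨W, hW, fun t ↦ by simpa using h (-t)⟩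
  | left_absorb b y _ ih =>
    obtain ⟨W, hW, h⟩ := ih (u * b)
    exact ⟨W, hW, fun t ↦ by simpa only [mul_assoc] using h t⟩
  | right_absorb b y _ ih =>
    obtain ⟨W, hW, h⟩ := ih u
    exact ⟨W, hW, fun t ↦ by simpa only [mul_assoc] using h (b * t)⟩

theorem mul_eq_zero_of_star_mul_mul_eq_zero (hsimple : ∀ I : TwoSidedIdeal A, I = ⊥ ∨ I = ⊤)
    (hPC : IsPrepositiveCone F PC) {a x : A} (ha : a ∈ PC) (hx : star x * a * x = 0) :
    a * x = 0 := by
  by_contra hax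
  have hspan : TwoSidedIdeal.span {a * x} = ⊤ := by
    refine (hsimple _).resolve_left fun hbot ↦ hax ?_
    simpa [hbot] using TwoSidedIdeal.subset_span (Set.mem_singleton (a * x))
  have h1 : (1 : A) ∈ TwoSidedIdeal.span {a * x} := hspan ▸ TwoSidedIdeal.mem_top _
  obtain ⟨W, hW, h⟩ := hPC.exists_forall_add_add_star_mem_of_mem_span ha hx h1 1
  simp only [one_mul] at h
  exact hax (by rw [hPC.eq_zero_of_forall_add_add_star_mem hW h ha, zero_mul])

end IsPrepositiveCone

section DiagForm

variable {A : Type*} [Ring A] [StarRing A] {ι : Type*} [Fintype ι]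

/-- The value `⟨c₁,…,c_k⟩_σ(w, w)` of a diagonal hermitian form. -/
def diagForm (c w : ι → A) : A :=
  ∑ i, star (w i) * c i * w i

theorem diagForm_neg (c w : ι → A) : diagForm (-c) w = -diagForm c w := by
  simp [diagForm, Finset.sum_neg_distrib]

theorem diagForm_eq_star_dotProduct [DecidableEq ι] (c w : ι → A) :
    diagForm c w = star w ⬝ᵥ (diagonal c *ᵥ w) := by
  simp only [diagForm, dotProduct, Pi.star_apply, Matrix.mulVec_diagonal, mul_assoc]

theorem diagForm_mulVec [DecidableEq ι] {U : Matrix ι ι A} {c d : ι → A}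
    (hcong : Uᴴ * diagonal c * U = diagonal d) (w : ι → A) :
    diagForm c (U *ᵥ w) = diagForm d w := by
  rw [diagForm_eq_star_dotProduct, diagForm_eq_star_dotProduct, mulVec_mulVec,
    dotProduct_mulVec, star_mulVec, vecMul_vecMul, ← Matrix.mul_assoc, hcong,
    ← dotProduct_mulVec]

end DiagForm

namespace IsPrepositiveCone

variable {F A : Type*} [Field F] [Ring A] [Algebra F A] [StarRing A] {PC : Set A}
  {ι : Type*} [Fintype ι]

theorem star_mul_mul_mem_of_eq_zero_or_mem (hPC : IsPrepositiveCone F PC) {w c : A}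
    (h : w = 0 ∨ c ∈ PC) : star w * c * w ∈ PC := by
  rcases h with rfl | hc
  · simpa using hPC.zero_mem
  · exact hPC.star_mul_mul_mem w hc

theorem diagForm_mem (hPC : IsPrepositiveCone F PC) {c w : ι → A}
    (hcw : ∀ i, w i = 0 ∨ c i ∈ PC) : diagForm c w ∈ PC :=
  hPC.sum_mem fun i _ ↦ hPC.star_mul_mul_mem_of_eq_zero_or_mem (hcw i)

theorem eq_zero_of_diagForm_eq_zero (hsimple : ∀ I : TwoSidedIdeal A, I = ⊥ ∨ I = ⊤)
    (hPC : IsPrepositiveCone F PC) {c w : ι → A}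
    (hcw : ∀ i, w i = 0 ∨ (c i ∈ PC ∧ IsUnit (c i))) (h : diagForm c w = 0) : w = 0 := by
  funext i
  obtain hwi | ⟨hci, hunit⟩ := hcw i
  · exact hwi
  have hterm : star (w i) * c i * w i = 0 :=
    hPC.eq_zero_of_sum_eq_zero
      (fun j _ ↦ hPC.star_mul_mul_mem_of_eq_zero_or_mem ((hcw j).imp_right And.left)) h
      (Finset.mem_univ i)
  exact hunit.mul_right_eq_zero.mp (hPC.mul_eq_zero_of_star_mul_mul_eq_zero hsimple hci hterm)

theorem eq_zero_of_conjTranspose_mul_diagonal_mul [DecidableEq ι]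
    (hsimple : ∀ I : TwoSidedIdeal A, I = ⊥ ∨ I = ⊤) (hPC : IsPrepositiveCone F PC)
    {U : Matrix ι ι A} {c d : ι → A} (hcong : Uᴴ * diagonal c * U = diagonal d)
    (hd : ∀ i, d i ∉ PC → -d i ∈ PC ∧ IsUnit (d i)) {w : ι → A}
    (hw : ∀ i, d i ∈ PC → w i = 0) (hUw : ∀ i, c i ∉ PC → (U *ᵥ w) i = 0) : w = 0 := by
  have hpos : diagForm d w ∈ PC := by
    rw [← diagForm_mulVec hcong]
    exact hPC.diagForm_mem fun i ↦ (em (c i ∈ PC)).symm.imp (hUw i) id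
  have hcw : ∀ i, w i = 0 ∨ ((-d) i ∈ PC ∧ IsUnit ((-d) i)) := fun i ↦
    (em (d i ∈ PC)).imp (hw i) fun hdi ↦ ⟨(hd i hdi).1, (hd i hdi).2.neg⟩
  have hneg : diagForm (-d) w ∈ PC := hPC.diagForm_mem fun i ↦ (hcw i).imp_right And.left
  refine hPC.eq_zero_of_diagForm_eq_zero hsimple hcw ?_
  rw [diagForm_neg] at hneg ⊢
  rw [hPC.eq_zero_of_mem_of_neg_mem hpos hneg, neg_zero]

theorem natCard_mem_le_of_conjTranspose_mul_diagonal_mul [DecidableEq ι] [FiniteDimensional F A]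
    [Nontrivial A]
    (hsimple : ∀ I : TwoSidedIdeal A, I = ⊥ ∨ I = ⊤) (hPC : IsPrepositiveCone F PC)
    {U : Matrix ι ι A} {c d : ι → A} (hcong : Uᴴ * diagonal c * U = diagonal d)
    (hd : ∀ i, d i ∉ PC → -d i ∈ PC ∧ IsUnit (d i)) :
    Nat.card {i // c i ∈ PC} ≤ Nat.card {i // d i ∈ PC} := by
  classical
  let Φ : (ι → A) →ₗ[F] ({i // d i ∈ PC} → A) × ({i // c i ∉ PC} → A) :=
    (LinearMap.funLeft F A Subtype.val).prod
      (LinearMap.funLeft F A Subtype.val ∘ₗ mulVecBilin F F U)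
  have hΦ : Function.Injective Φ := by
    refine (injective_iff_map_eq_zero Φ).mpr fun w hw ↦ ?_
    obtain ⟨hw₁, hw₂⟩ := Prod.mk_eq_zero.mp hw
    exact hPC.eq_zero_of_conjTranspose_mul_diagonal_mul hsimple hcong hd
      (fun i hi ↦ congr_fun hw₁ ⟨i, hi⟩) (fun i hi ↦ congr_fun hw₂ ⟨i, hi⟩)
  have hrank := LinearMap.finrank_le_finrank_of_injective hΦ
  simp only [Module.finrank_prod, Module.finrank_pi_fintype, Finset.sum_const,
    Finset.card_univ, smul_eq_mul, ← add_mul] at hrank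
  have hle := Nat.le_of_mul_le_mul_right hrank Module.finrank_pos
  rw [Fintype.card_subtype_compl] at hle
  have := Fintype.card_subtype_le fun i ↦ c i ∈ PC
  simp only [Nat.card_eq_fintype_card]
  omega

theorem natCard_mem_add_natCard_neg_mem (hPC : IsPrepositiveCone F PC) {c : ι → A}
    (hc : ∀ i, c i ≠ 0 ∧ (c i ∈ PC ∨ -c i ∈ PC)) :
    Nat.card {i // c i ∈ PC} + Nat.card {i // -c i ∈ PC} = Fintype.card ι := by
  classical
  have hneg : ∀ i, -c i ∈ PC ↔ c i ∉ PC := fun i ↦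
    ⟨fun hn hp ↦ (hc i).1 (hPC.eq_zero_of_mem_of_neg_mem hp hn), (hc i).2.resolve_left⟩
  simp only [hneg, Nat.card_eq_fintype_card, Fintype.card_subtype_compl]
  have := Fintype.card_subtype_le fun i ↦ c i ∈ PC
  omega

end IsPrepositiveCone

theorem stmt_18_general {F A : Type*} [Field F] [Ring A] [Algebra F A] [StarRing A]
    [FiniteDimensional F A] [Nontrivial A]
    (hsimple : ∀ I : TwoSidedIdeal A, I = ⊥ ∨ I = ⊤)
    (PC : Set A) (hpos : IsPositiveCone F PC)
    (k : ℕ) (c d : Fin k → A)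
    (hc : ∀ i, IsUnit (c i) ∧ (c i ∈ PC ∨ -c i ∈ PC))
    (hd : ∀ i, IsUnit (d i) ∧ (d i ∈ PC ∨ -d i ∈ PC))
    (U : Matrix (Fin k) (Fin k) A)
    (hcong : Uᴴ * Matrix.diagonal c * U = Matrix.diagonal d) :
    Nat.card {i : Fin k // c i ∈ PC} = Nat.card {i : Fin k // d i ∈ PC} ∧
    Nat.card {i : Fin k // -c i ∈ PC} = Nat.card {i : Fin k // -d i ∈ PC} := by
  have hPC := hpos.1
  have hcong_neg : Uᴴ * diagonal (-c) * U = diagonal (-d) := by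
    have (x : Fin k → A) : diagonal (-x) = -diagonal x := (diagonal_neg x).symm
    rw [this, this, Matrix.mul_neg, Matrix.neg_mul, hcong]
  have hle := hPC.natCard_mem_le_of_conjTranspose_mul_diagonal_mul hsimple hcong
    fun i hi ↦ ⟨(hd i).2.resolve_left hi, (hd i).1⟩
  have hle_neg := hPC.natCard_mem_le_of_conjTranspose_mul_diagonal_mul hsimple hcong_neg
    fun i hi ↦ ⟨by simpa using (hd i).2.resolve_right hi, (hd i).1.neg⟩
  have hcard_c := hPC.natCard_mem_add_natCard_neg_mem fun i ↦ ⟨(hc i).1.ne_zero, (hc i).2⟩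
  have hcard_d := hPC.natCard_mem_add_natCard_neg_mem fun i ↦ ⟨(hd i).1.ne_zero, (hd i).2⟩
  simp only [Pi.neg_apply] at hle_neg
  omega

/-- Sylvester inertia with respect to a positive cone: if two diagonal hermitian forms
`⟨c₁,…,c_k⟩_σ` and `⟨d₁,…,d_k⟩_σ`, all of whose coefficients are invertible elements of
`PC ∪ -PC`, are isometric (i.e. their Gram matrices are congruent via
`U ↦ σ(U)ᵗ ⬝ U` for an invertible matrix `U`), then the numbers of coefficients in `PC`
agree, as do the numbers of coefficients in `-PC`. -/
theorem stmt_18 {F A : Type*} [Field F] [Ring A] [Algebra F A] [StarRing A]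
    [FiniteDimensional F A] [Nontrivial A] (h2 : (2 : F) ≠ 0)
    (hsimple : ∀ I : TwoSidedIdeal A, I = ⊥ ∨ I = ⊤)
    (hstar : ∀ c : F, star (algebraMap F A c) = algebraMap F A c)
    (hF : ∀ a : A, (∀ b : A, a * b = b * a) → star a = a → ∃ c : F, algebraMap F A c = a)
    (PC : Set A) (hpos : IsPositiveCone F PC)
    (k : ℕ) (c d : Fin k → A)
    (hc : ∀ i, IsUnit (c i) ∧ (c i ∈ PC ∨ -c i ∈ PC))
    (hd : ∀ i, IsUnit (d i) ∧ (d i ∈ PC ∨ -d i ∈ PC))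
    (U : Matrix (Fin k) (Fin k) A) (hU : IsUnit U)
    (hcong : Uᴴ * Matrix.diagonal c * U = Matrix.diagonal d) :
    Nat.card {i : Fin k // c i ∈ PC} = Nat.card {i : Fin k // d i ∈ PC} ∧
    Nat.card {i : Fin k // -c i ∈ PC} = Nat.card {i : Fin k // -d i ∈ PC} :=
  stmt_18_general hsimple PC hpos k c d hc hd U hcong
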